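/- For a merge algebra A the following conditions are equivalent: (1) A is degenerate; (2) σ̄(x) = x holds identically for every finite permutation σ; (3) x ⋆_n y = y holds identically for every n ∈ ω. -/

import Mathlib

/-!
If every `σ̄` is the identity, (B6) applied to the transpositions `(0 m+1)` and `(m m+1)`
collapses to the identities `x ⋆_1 y = y ⋆_{m+1} (x ⋆_{m+2} y)` and
`x ⋆_{m+1} y = x ⋆_m (x ⋆_1 y)`. For `m = 0, 1` these, with (B1) and (B3), force `⋆_1` to be
the right projection, and the second identity then propagates this to every `⋆_n`.
Conversely, if every `⋆_n` is the right projection, (B6) with `n = 0` reads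
`σ̄ x = σ̄ (x ⋆_0 x) = (…) ⋆_k x = x`.
-/

universe u

open scoped Classical

/-- A finite permutation of ω: an element of S_ω, i.e. a permutation moving
only finitely many points. -/
def FinPerm (σ : Equiv.Perm ℕ) : Prop := {n : ℕ | σ n ≠ n}.Finite

/-- The raw operations of a merge algebra: the binary merges `⋆_n` and the
actions `σ̄` of (finite) permutations. -/
structure MergeOps (A : Type u) where
  star : ℕ → A → A → A
  bar : Equiv.Perm ℕ → A → A

namespace MergeOps

variable {A : Type u}

/-- `chain g k = ((g 0 ⋆_1 g 1) ⋆_2 g 2) … ⋆_k (g k)`. -/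
def chain (M : MergeOps A) (g : ℕ → A) : ℕ → A
  | 0 => g 0
  | i + 1 => M.star (i + 1) (M.chain g i) (g (i + 1))

/-- `chainStar g k y = ((…(g 0 ⋆_1 g 1) ⋆_2 …) ⋆_{k-1} g (k-1)) ⋆_k y`. -/
def chainStar (M : MergeOps A) (g : ℕ → A) (k : ℕ) (y : A) : A :=
  match k with
  | 0 => y
  | k + 1 => M.star (k + 1) (M.chain g k) y

/-- The `n`-coordinate of `x` relative to the coordinator `pt`:
`x[n] = τ̄^n_0(x) ⋆_1 pt`. -/
def coord (M : MergeOps A) (pt x : A) (n : ℕ) : A :=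
  M.star 1 (M.bar (Equiv.swap 0 n) x) pt

end MergeOps

/-- A merge algebra: operations `⋆_n` and `σ̄` satisfying axioms (B1)–(B7). -/
structure MergeAlgebra (A : Type u) extends MergeOps A where
  /-- (B1) each `⋆_n` is associative -/
  star_assoc : ∀ (n : ℕ) (x y z : A), star n (star n x y) z = star n x (star n y z)
  /-- (B1) each `⋆_n` is idempotent -/
  star_idem : ∀ (n : ℕ) (x : A), star n x x = x
  /-- (B2) -/
  star_zero : ∀ x y : A, star 0 x y = y
  /-- (B3), first part (k ≥ n) -/
  B3a : ∀ {n k : ℕ}, n ≤ k → ∀ x y z : A, star n (star k x y) z = star n x z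
  /-- (B3), second part (k ≥ n) -/
  B3b : ∀ {n k : ℕ}, n ≤ k → ∀ x y z : A, star k x (star n y z) = star k x z
  /-- (B4) (k < n) -/
  B4 : ∀ {n k : ℕ}, k < n → ∀ x y z : A, star n (star k x y) z = star k x (star n y z)
  /-- (B5) `σ̄(τ̄(x)) = (τ∘σ)‾(x)` -/
  B5 : ∀ σ τ : Equiv.Perm ℕ, FinPerm σ → FinPerm τ → ∀ x : A,
      bar σ (bar τ x) = bar (τ * σ) x
  /-- (B5) `ῑ(x) = x` -/
  bar_id : ∀ x : A, bar 1 x = x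
  /-- (B6): for `n ≤ k` and `σ` a permutation of `k`, with `f i = x` iff `σ i < n`:
  `σ̄(x ⋆_n y) = ((…(σ̄(f 0) ⋆_1 σ̄(f 1)) ⋆_2 …) ⋆_{k-1} σ̄(f (k-1))) ⋆_k y`. -/
  B6 : ∀ {n k : ℕ}, n ≤ k → ∀ σ : Equiv.Perm ℕ, (∀ i, k ≤ i → σ i = i) →
      ∀ x y : A, bar σ (star n x y) =
        toMergeOps.chainStar (fun i => bar σ (if σ i < n then x else y)) k y
  /-- (B7) -/
  B7 : ∀ {m n : ℕ} (σ τ : Equiv.Perm ℕ), FinPerm σ → FinPerm τ →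
      (∀ i, m ≤ i → i < n → σ i = τ i) →
      ∀ x y z : A, star n (star m z (bar σ x)) y = star n (star m z (bar τ x)) y

/-- A merge algebra is degenerate if all permutation actions are trivial and
`x ⋆_n y = y` for all `n`. -/
def MergeAlgebra.Degenerate {A : Type u} (M : MergeAlgebra A) : Prop :=
  (∀ σ : Equiv.Perm ℕ, FinPerm σ → ∀ x : A, M.bar σ x = x) ∧
    (∀ (n : ℕ) (x y : A), M.star n x y = y)

lemma finPerm_swap (a b : ℕ) : FinPerm (Equiv.swap a b) :=
  (Set.toFinite {a, b}).subset fun n hn => by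
    by_contra hab
    simp only [Set.mem_insert_iff, Set.mem_singleton_iff, not_or] at hab
    exact hn (Equiv.swap_apply_of_ne_of_ne hab.1 hab.2)

lemma FinPerm.exists_forall_ge_fixed {σ : Equiv.Perm ℕ} (hσ : FinPerm σ) :
    ∃ k, ∀ i, k ≤ i → σ i = i := by
  obtain ⟨k, hk⟩ := hσ.bddAbove
  exact ⟨k + 1, fun i hi => by_contra fun h => absurd (hk h) (by omega)⟩

namespace MergeOps

variable {A : Type u}

lemma chainStar_eq_right (N : MergeOps A) (h : ∀ (n : ℕ) (x y : A), N.star n x y = y)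
    (g : ℕ → A) (k : ℕ) (y : A) : N.chainStar g k y = y := by
  cases k with
  | zero => rfl
  | succ k => exact h _ _ _

end MergeOps

namespace MergeAlgebra

open Equiv

variable {A : Type u} (M : MergeAlgebra A)

lemma chain_eq_star {g : ℕ → A} {a : A} {m : ℕ} (h : ∀ i < m, g i = a) :
    M.chain g m = M.star m a (g m) := by
  induction m with
  | zero => exact (M.star_zero a (g 0)).symm
  | succ m ih =>
    rw [MergeOps.chain, ih fun i hi => h i (by omega), h m (by omega), M.star_idem]

lemma bar_swap_zero_star_one (m : ℕ) (x y : A) :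
    M.bar (swap 0 (m + 1)) (M.star 1 x y) =
      M.star (m + 1) (M.bar (swap 0 (m + 1)) y) (M.star (m + 2) (M.bar (swap 0 (m + 1)) x) y) := by
  have hlt : ∀ i, swap 0 (m + 1) i < 1 ↔ i = m + 1 := fun i => by
    rw [swap_apply_def]; split_ifs <;> omega
  rw [M.B6 (by omega : 1 ≤ m + 2) _ fun i hi => swap_apply_of_ne_of_ne (by omega) (by omega)]
  show M.star (m + 2) (M.star (m + 1) (M.chain _ m) _) y = _
  rw [M.chain_eq_star (a := M.bar (swap 0 (m + 1)) y) fun i hi => by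
      rw [if_neg ((hlt i).not.mpr (by omega))],
    if_neg ((hlt m).not.mpr (by omega))]
  beta_reduce
  rw [if_pos ((hlt (m + 1)).mpr rfl), M.star_idem]
  exact M.B4 (by omega) _ _ _

lemma bar_swap_succ_star_succ (m : ℕ) (x y : A) :
    M.bar (swap m (m + 1)) (M.star (m + 1) x y) =
      M.star m (M.bar (swap m (m + 1)) x)
        (M.star (m + 1) (M.bar (swap m (m + 1)) y) (M.star (m + 2) (M.bar (swap m (m + 1)) x) y)) := by
  have hlt : ∀ i < m + 2, swap m (m + 1) i < m + 1 ↔ i ≠ m := fun i hi => by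
    rw [swap_apply_def]; split_ifs <;> omega
  rw [M.B6 (by omega : m + 1 ≤ m + 2) _ fun i hi => swap_apply_of_ne_of_ne (by omega) (by omega)]
  show M.star (m + 2) (M.star (m + 1) (M.chain _ m) _) y = _
  rw [M.chain_eq_star (a := M.bar (swap m (m + 1)) x) fun i hi => by
      rw [if_pos ((hlt i (by omega)).mpr (by omega))],
    if_neg ((hlt m (by omega)).not.mpr (by omega))]
  beta_reduce
  rw [if_pos ((hlt (m + 1) (by omega)).mpr (by omega)),
    M.B4 (by omega), M.B4 (by omega)]

lemma star_one_eq_of_bar_eq_self (hbar : ∀ σ, FinPerm σ → ∀ x : A, M.bar σ x = x)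
    (m : ℕ) (x y : A) : M.star 1 x y = M.star (m + 1) y (M.star (m + 2) x y) := by
  simpa only [hbar _ (finPerm_swap _ _)] using M.bar_swap_zero_star_one m x y

lemma star_succ_eq_of_bar_eq_self (hbar : ∀ σ, FinPerm σ → ∀ x : A, M.bar σ x = x)
    (m : ℕ) (x y : A) : M.star (m + 1) x y = M.star m x (M.star 1 x y) := by
  rw [M.star_one_eq_of_bar_eq_self hbar m]
  simpa only [hbar _ (finPerm_swap _ _)] using M.bar_swap_succ_star_succ m x y

lemma star_eq_right_of_bar_eq_self (hbar : ∀ σ, FinPerm σ → ∀ x : A, M.bar σ x = x)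
    (n : ℕ) (x y : A) : M.star n x y = y := by
  have star_one : ∀ x y : A, M.star 1 x y = y := fun x y => by
    have star_two : M.star 2 x y = M.star 1 x y := by
      rw [M.star_succ_eq_of_bar_eq_self hbar 1, ← M.star_assoc, M.star_idem]
    rw [M.star_one_eq_of_bar_eq_self hbar 0, star_two, M.B3b le_rfl, M.star_idem]
  induction n generalizing x with
  | zero => exact M.star_zero x y
  | succ m ih => rw [M.star_succ_eq_of_bar_eq_self hbar, star_one, ih]

lemma bar_eq_self_of_star_eq_right (hstar : ∀ (n : ℕ) (x y : A), M.star n x y = y)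
    (σ : Equiv.Perm ℕ) (hσ : FinPerm σ) (x : A) : M.bar σ x = x := by
  obtain ⟨k, hk⟩ := hσ.exists_forall_ge_fixed
  calc M.bar σ x = M.bar σ (M.star 0 x x) := by rw [M.star_zero]
    _ = x := by rw [M.B6 k.zero_le σ hk]; exact M.chainStar_eq_right hstar _ _ _

end MergeAlgebra

/-- STATEMENT 5: for a merge algebra `A` the following are equivalent:
(1) `A` is degenerate; (2) `σ̄(x) = x` for every finite permutation `σ`;
(3) `x ⋆_n y = y` for every `n`. -/
theorem degenerate_tfae {A : Type u} (M : MergeAlgebra A) :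
    List.TFAE
      [M.Degenerate,
        ∀ σ : Equiv.Perm ℕ, FinPerm σ → ∀ x : A, M.bar σ x = x,
        ∀ (n : ℕ) (x y : A), M.star n x y = y] := by
  tfae_have 1 → 2 := And.left
  tfae_have 1 → 3 := And.right
  tfae_have 2 → 1 := fun hbar => ⟨hbar, M.star_eq_right_of_bar_eq_self hbar⟩
  tfae_have 3 → 1 := fun hstar => ⟨M.bar_eq_self_of_star_eq_right hstar, hstar⟩
  tfae_finish
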